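/- Let F : ℍ → ℝ be bounded and harmonic on ℍ (that is, twice continuously differentiable with vanishing Euclidean Laplacian on ℍ, viewing ℍ ⊆ ℂ ≅ ℝ²). Suppose that for every x ∈ ℝ with x ≠ 0, F(z) → 0 as z → x with z ∈ ℍ. Then F is identically 0 on ℍ. -/

import Mathlib

open Filter

/-- The Euclidean Laplacian `Δf = ∂²f/∂x² + ∂²f/∂y²` of a function `f : ℂ → ℝ` of the
real coordinates `(Re z, Im z)`. -/
noncomputable def planeLaplacian (f : ℂ → ℝ) (z : ℂ) : ℝ :=
  deriv (deriv (fun x : ℝ => f ((x : ℂ) + z.im * Complex.I))) z.re +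
    deriv (deriv (fun y : ℝ => f ((z.re : ℂ) + y * Complex.I))) z.im

/-!
The function `b z = log ‖z / (z + i)²‖` is harmonic on the upper half-plane and bounded there by
`-|log ‖z‖|`, so it tends to `-∞` both at `0` and at `∞`. If `F ≤ C`, then for every `ε > 0` the
harmonic function `F + ε b` has boundary values `≤ 0` on the half-annulus
`e^{-T} < ‖z‖ < e^T` as soon as `ε T ≥ C`: on the real segments because `F → 0` and `b ≤ 0`,
on the two arcs because `ε b ≤ -C`. The weak maximum principle gives `F ≤ -ε b`, and letting
`ε → 0` gives `F ≤ 0`; the same argument for `-F` gives `F = 0`.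
-/

open Set Topology InnerProductSpace Laplacian

theorem deriv_deriv_comp_add_smul {E F : Type*} [NormedAddCommGroup E] [NormedSpace ℝ E]
    [NormedAddCommGroup F] [NormedSpace ℝ F] {f : E → F} {p v : E} {t : ℝ}
    (hf : ContDiffAt ℝ 2 f (p + t • v)) :
    deriv (deriv fun s : ℝ => f (p + s • v)) t = iteratedFDeriv ℝ 2 f (p + t • v) ![v, v] := by
  have hline (s : ℝ) : HasDerivAt (fun s : ℝ => p + s • v) v s := by
    simpa using ((hasDerivAt_id s).smul_const v).const_add p
  have hdiff : ∀ᶠ s in 𝓝 t, DifferentiableAt ℝ f (p + s • v) :=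
    (hline t).continuousAt.eventually (hf.eventually (by decide)) |>.mono
      fun _ hs => hs.differentiableAt (by norm_num)
  have hfirst : deriv (fun s : ℝ => f (p + s • v)) =ᶠ[𝓝 t]
      fun s => fderiv ℝ f (p + s • v) v :=
    hdiff.mono fun s hs => (hs.hasFDerivAt.comp_hasDerivAt s (hline s)).deriv
  have hsecond : HasDerivAt (fun s => fderiv ℝ f (p + s • v))
      (fderiv ℝ (fderiv ℝ f) (p + t • v) v) t :=
    ((hf.fderiv_right (m := 1) (by norm_num)).differentiableAt (by norm_num)).hasFDerivAt
      |>.comp_hasDerivAt t (hline t)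
  rw [hfirst.deriv_eq, iteratedFDeriv_two_apply]
  simpa using (hsecond.clm_apply (hasDerivAt_const t v)).deriv

theorem IsLocalMax.deriv_deriv_nonpos {f : ℝ → ℝ} {a : ℝ} (h : IsLocalMax f a)
    (hc : ContinuousAt f a) : deriv (deriv f) a ≤ 0 := by
  by_contra! hpos
  have hconst : f =ᶠ[𝓝 a] fun _ => f a :=
    (h.and (isLocalMin_of_deriv_deriv_pos hpos h.deriv_eq_zero hc)).mono
      fun _ hx => le_antisymm hx.1 hx.2
  simp [hconst.deriv.deriv_eq] at hpos

theorem IsLocalMax.iteratedFDeriv_two_nonpos {E : Type*} [NormedAddCommGroup E]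
    [NormedSpace ℝ E] {f : E → ℝ} {x : E} (h : IsLocalMax f x) (hf : ContDiffAt ℝ 2 f x)
    (v : E) : iteratedFDeriv ℝ 2 f x ![v, v] ≤ 0 := by
  have hline : ContinuousAt (fun s : ℝ => x + s • v) 0 := by fun_prop
  have h0 : x + (0 : ℝ) • v = x := by simp
  rw [← h0] at h hf ⊢
  rw [← deriv_deriv_comp_add_smul hf]
  exact (h.comp_continuous (g := fun s : ℝ => x + s • v) hline).deriv_deriv_nonpos
    (hf.continuousAt.comp (f := fun s : ℝ => x + s • v) hline)

theorem exists_isMaxOn_of_eventually_lt_on_frontier {X α : Type*} [PseudoMetricSpace X]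
    [ProperSpace X] [LinearOrder α] [TopologicalSpace α] [OrderClosedTopology α]
    {Ω : Set X} (hb : Bornology.IsBounded Ω) {g : X → α} (hg : ContinuousOn g Ω)
    {x₀ : X} (hx₀ : x₀ ∈ Ω) (hfr : ∀ ζ ∈ frontier Ω, ∀ᶠ x in 𝓝[Ω] ζ, g x < g x₀) :
    ∃ z ∈ Ω, IsMaxOn g Ω z := by
  set K := {x ∈ Ω | g x₀ ≤ g x}
  have hKΩ : K ⊆ Ω := sep_subset _ _
  have hK : IsClosed K := by
    refine isClosed_of_closure_subset fun ζ hζ => ?_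
    have hle : 𝓝[K] ζ ≤ 𝓝[Ω] ζ := nhdsWithin_mono _ hKΩ
    have hgK : ∀ᶠ x in 𝓝[K] ζ, g x₀ ≤ g x := eventually_mem_nhdsWithin.mono fun _ hx => hx.2
    have := mem_closure_iff_nhdsWithin_neBot.1 hζ
    have hζΩ : ζ ∈ Ω := by
      by_contra hζΩ
      obtain ⟨x, hlt, hge⟩ :=
        ((hfr ζ ⟨closure_mono hKΩ hζ, fun h => hζΩ (interior_subset h)⟩).filter_mono hle
          |>.and hgK).exists
      exact hlt.not_ge hge
    exact ⟨hζΩ, ge_of_tendsto ((hg ζ hζΩ).tendsto.mono_left hle) hgK⟩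
  obtain ⟨z, hzK, hz⟩ := (Metric.isCompact_of_isClosed_isBounded hK (hb.subset hKΩ)).exists_isMaxOn
    ⟨x₀, hx₀, le_rfl⟩ (hg.mono hKΩ)
  refine ⟨z, hzK.1, fun x hx => ?_⟩
  by_cases hxK : g x₀ ≤ g x
  · exact hz ⟨hx, hxK⟩
  · exact (lt_of_not_ge hxK).le.trans (hz ⟨hx₀, le_rfl⟩)

section MaximumPrinciple

variable {E : Type*} [NormedAddCommGroup E] [InnerProductSpace ℝ E] [FiniteDimensional ℝ E]

theorem IsLocalMax.laplacian_nonpos {f : E → ℝ} {x : E} (h : IsLocalMax f x)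
    (hf : ContDiffAt ℝ 2 f x) : Δ f x ≤ 0 := by
  rw [laplacian_eq_iteratedFDeriv_stdOrthonormalBasis]
  exact Finset.sum_nonpos fun i _ => h.iteratedFDeriv_two_nonpos hf _

theorem laplacian_norm_sq (x : E) : Δ (fun y : E => ‖y‖ ^ 2) x = 2 * Module.finrank ℝ E := by
  have h : fderiv ℝ (fderiv ℝ fun y : E => ‖y‖ ^ 2) x = 2 • innerSL ℝ := by
    rw [fderiv_norm_sq]; exact ((innerSL ℝ).hasFDerivAt.const_smul 2).fderiv
  rw [laplacian_eq_iteratedFDeriv_stdOrthonormalBasis]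
  simp only [iteratedFDeriv_two_apply, h]
  simp [innerSL_apply_apply ℝ, mul_comm]

theorem InnerProductSpace.HarmonicOnNhd.nonpos_of_frontier [Nontrivial E] {Ω : Set E}
    (hΩ : IsOpen Ω) (hb : Bornology.IsBounded Ω) {h : E → ℝ} (hh : HarmonicOnNhd h Ω)
    (hfr : ∀ ζ ∈ frontier Ω, ∀ ε > 0, ∀ᶠ x in 𝓝[Ω] ζ, h x < ε) :
    ∀ x ∈ Ω, h x ≤ 0 := by
  intro x₀ hx₀
  by_contra! hpos
  obtain ⟨R, hR⟩ := hb.exists_norm_le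
  set δ := h x₀ / (2 * (R ^ 2 + 1))
  have hδ : 0 < δ := by positivity
  have hδR : ∀ x ∈ Ω, δ * ‖x‖ ^ 2 ≤ h x₀ / 2 := fun x hx => by
    have : ‖x‖ ^ 2 ≤ R ^ 2 + 1 := by nlinarith [hR x hx, norm_nonneg x]
    calc δ * ‖x‖ ^ 2 ≤ δ * (R ^ 2 + 1) := by gcongr
      _ = h x₀ / 2 := by simp only [δ]; field_simp
  -- `h + δ ‖·‖²` is strictly subharmonic, so it cannot have an interior maximum.
  set v : E → ℝ := h + δ • fun x => ‖x‖ ^ 2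
  have hv (x : E) : v x = h x + δ * ‖x‖ ^ 2 := rfl
  have hvfr : ∀ ζ ∈ frontier Ω, ∀ᶠ x in 𝓝[Ω] ζ, v x < v x₀ := fun ζ hζ => by
    filter_upwards [hfr ζ hζ (h x₀ / 2) (by positivity), self_mem_nhdsWithin] with x hx hxΩ
    have := hδR x hxΩ
    have := mul_nonneg hδ.le (sq_nonneg ‖x₀‖)
    rw [hv, hv]; linarith
  obtain ⟨z, hz, hmax⟩ := exists_isMaxOn_of_eventually_lt_on_frontier hb
    (hh.continuousOn.add (by fun_prop)) hx₀ hvfr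
  have hq : ContDiffAt ℝ 2 (fun x : E => ‖x‖ ^ 2) z := (contDiff_norm_sq ℝ).contDiffAt
  have hδq : ContDiffAt ℝ 2 (δ • fun x : E => ‖x‖ ^ 2) z := hq.const_smul δ
  have hΔ : Δ v z = 2 * Module.finrank ℝ E * δ := by
    change Δ (h + δ • fun x : E => ‖x‖ ^ 2) z = _
    rw [(hh z hz).1.laplacian_add hδq, laplacian_smul δ hq, laplacian_norm_sq,
      (hh z hz).2.eq_of_nhds]
    simp [mul_comm]
  have hΔle := (hmax.isLocalMax (hΩ.mem_nhds hz)).laplacian_nonpos ((hh z hz).1.add hδq)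
  have : (0 : ℝ) < Module.finrank ℝ E := by exact_mod_cast Module.finrank_pos
  have : 0 < 2 * (Module.finrank ℝ E : ℝ) * δ := by positivity
  linarith

end MaximumPrinciple

theorem planeLaplacian_eq_laplacian {f : ℂ → ℝ} {z : ℂ} (hf : ContDiffAt ℝ 2 f z) :
    planeLaplacian f z = Δ f z := by
  have hre : (fun x : ℝ => f ((x : ℂ) + z.im * Complex.I)) =
      fun x : ℝ => f (z.im * Complex.I + x • (1 : ℂ)) := by
    funext x; simp [add_comm]
  have him : (fun y : ℝ => f ((z.re : ℂ) + y * Complex.I)) =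
      fun y : ℝ => f (z.re + y • Complex.I) := by
    funext y; simp [Complex.real_smul]
  have hz₁ : z.im * Complex.I + z.re • (1 : ℂ) = z := by simp [add_comm, Complex.re_add_im]
  have hz₂ : (z.re : ℂ) + z.im • Complex.I = z := by simp [Complex.real_smul, Complex.re_add_im]
  rw [planeLaplacian, laplacian_eq_iteratedFDeriv_complexPlane, hre, him,
    deriv_deriv_comp_add_smul (by rwa [hz₁]), deriv_deriv_comp_add_smul (by rwa [hz₂]), hz₁, hz₂]

theorem harmonicOnNhd_of_planeLaplacian_eq_zero {f : ℂ → ℝ} {U : Set ℂ} (hU : IsOpen U)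
    (hf : ContDiffOn ℝ 2 f U) (hΔ : ∀ z ∈ U, planeLaplacian f z = 0) : HarmonicOnNhd f U :=
  fun z hz => ⟨hf.contDiffAt (hU.mem_nhds hz), eventually_of_mem (hU.mem_nhds hz) fun w hw => by
    rw [← planeLaplacian_eq_laplacian (hf.contDiffAt (hU.mem_nhds hw)), hΔ w hw, Pi.zero_apply]⟩

noncomputable def upperHalfPlaneBarrier (z : ℂ) : ℝ := Real.log ‖z / (z + Complex.I) ^ 2‖

theorem add_I_ne_zero_of_im_pos {z : ℂ} (hz : 0 < z.im) : z + Complex.I ≠ 0 := by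
  intro h; have := congrArg Complex.im h; simp at this; linarith

theorem harmonicOnNhd_upperHalfPlaneBarrier :
    HarmonicOnNhd upperHalfPlaneBarrier {z : ℂ | 0 < z.im} := fun z hz => by
  have hz0 : z ≠ 0 := fun h => by simp [h] at hz
  have hden := pow_ne_zero 2 (add_I_ne_zero_of_im_pos hz)
  exact AnalyticAt.harmonicAt_log_norm
    (analyticAt_id.div ((analyticAt_id.add analyticAt_const).pow 2) hden) (div_ne_zero hz0 hden)

theorem upperHalfPlaneBarrier_le_neg_abs_log_norm {z : ℂ} (hz : 0 < z.im) :
    upperHalfPlaneBarrier z ≤ -|Real.log ‖z‖| := by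
  have hz0 : 0 < ‖z‖ := norm_pos_iff.2 fun h => by simp [h] at hz
  have h1 : 1 ≤ ‖z + Complex.I‖ := by
    have := Complex.abs_im_le_norm (z + Complex.I); simp at this
    rw [abs_of_pos (by linarith)] at this; linarith
  have h2 : ‖z‖ ≤ ‖z + Complex.I‖ := by
    rw [← sq_le_sq₀ (norm_nonneg _) (norm_nonneg _), Complex.sq_norm, Complex.sq_norm,
      Complex.normSq_apply, Complex.normSq_apply]
    simp; nlinarith
  have hlog₁ := Real.log_le_log hz0 h2
  have hlog₂ := Real.log_nonneg h1
  rw [upperHalfPlaneBarrier, norm_div, norm_pow, Real.log_div hz0.ne' (by positivity),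
    Real.log_pow]
  push_cast
  rcases abs_cases (Real.log ‖z‖) with ⟨habs, -⟩ | ⟨habs, -⟩ <;> linarith

theorem InnerProductSpace.HarmonicOnNhd.add_smul_upperHalfPlaneBarrier_nonpos {F : ℂ → ℝ}
    (hF : HarmonicOnNhd F {z : ℂ | 0 < z.im}) {C : ℝ} (hC : ∀ z ∈ {z : ℂ | 0 < z.im}, F z ≤ C)
    (hbdry : ∀ x : ℝ, x ≠ 0 → ∀ ε > 0, ∀ᶠ z in 𝓝[{z : ℂ | 0 < z.im}] (x : ℂ), F z < ε)
    {ε : ℝ} (hε : 0 < ε) {z₀ : ℂ} (hz₀ : 0 < z₀.im) :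
    F z₀ + ε * upperHalfPlaneBarrier z₀ ≤ 0 := by
  set H := {z : ℂ | 0 < z.im}
  set T := max (C / ε) (|Real.log ‖z₀‖| + 1)
  set Ω := {z : ℂ | 0 < z.im ∧ |Real.log ‖z‖| < T}
  set v := F + ε • upperHalfPlaneBarrier
  have hv (z : ℂ) : v z = F z + ε * upperHalfPlaneBarrier z := rfl
  have hvH : HarmonicOnNhd v H := hF.add harmonicOnNhd_upperHalfPlaneBarrier.const_smul
  have hΩH : Ω ⊆ H := fun z hz => hz.1
  have hnorm_pos {z : ℂ} (hz : z ∈ H) : 0 < ‖z‖ :=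
    (show 0 < z.im from hz).trans_le ((le_abs_self _).trans (Complex.abs_im_le_norm z))
  have hΩ : IsOpen Ω := by
    change IsOpen (H ∩ (fun z => |Real.log ‖z‖|) ⁻¹' Iio T)
    refine ContinuousOn.isOpen_inter_preimage (fun z hz => ?_)
      (isOpen_lt continuous_const Complex.continuous_im) isOpen_Iio
    exact ((Real.continuousAt_log (hnorm_pos hz).ne').comp
      continuous_norm.continuousAt).abs.continuousWithinAt
  have hΩb : Bornology.IsBounded Ω := isBounded_iff_forall_norm_le.2 ⟨Real.exp T, fun z hz =>
    ((Real.log_lt_iff_lt_exp (hnorm_pos hz.1)).1 (abs_lt.1 hz.2).2).le⟩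
  have hcl : closure Ω ⊆ {z : ℂ | 0 ≤ z.im ∧ Real.exp (-T) ≤ ‖z‖} :=
    closure_minimal (fun z hz => ⟨hz.1.le,
      ((Real.lt_log_iff_exp_lt (hnorm_pos hz.1)).1 (abs_lt.1 hz.2).1).le⟩)
      ((isClosed_le continuous_const Complex.continuous_im).inter
        (isClosed_le continuous_const continuous_norm))
  have hfr : ∀ ζ ∈ frontier Ω, ∀ ε' > 0, ∀ᶠ z in 𝓝[Ω] ζ, v z < ε' := by
    intro ζ hζ ε' hε'
    rw [hΩ.frontier_eq] at hζ
    obtain ⟨him, hζnorm⟩ := hcl hζ.1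
    rcases him.eq_or_lt with him | him
    · have hζre : (ζ.re : ℂ) = ζ := Complex.ext rfl (by simp [him])
      have hre : ζ.re ≠ 0 := fun h => by
        rw [← hζre, h, Complex.ofReal_zero, norm_zero] at hζnorm
        exact (Real.exp_pos _).not_ge hζnorm
      filter_upwards [hζre ▸ (hbdry ζ.re hre ε' hε').filter_mono (nhdsWithin_mono _ hΩH),
        self_mem_nhdsWithin] with z hz hzΩ
      have hb := (upperHalfPlaneBarrier_le_neg_abs_log_norm hzΩ.1).trans
        (neg_nonpos.2 (abs_nonneg _))
      have := mul_nonpos_of_nonneg_of_nonpos hε.le hb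
      rw [hv]; linarith
    · have hT : T ≤ |Real.log ‖ζ‖| := not_lt.1 fun h => hζ.2 ⟨him, h⟩
      have hCT : C ≤ ε * T := (div_le_iff₀' hε).1 (le_max_left _ _)
      have hb := mul_le_mul_of_nonneg_left
        ((upperHalfPlaneBarrier_le_neg_abs_log_norm him).trans (neg_le_neg hT)) hε.le
      have hvζ : v ζ ≤ 0 := by rw [hv]; linarith [hC ζ him]
      exact eventually_nhdsWithin_of_eventually_nhds
        ((hvH ζ him).1.continuousAt.eventually (eventually_lt_nhds (hvζ.trans_lt hε')))
  exact (hvH.mono hΩH).nonpos_of_frontier hΩ hΩb hfr z₀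
    ⟨hz₀, lt_max_of_lt_right (lt_add_one _)⟩

theorem InnerProductSpace.HarmonicOnNhd.nonpos_of_le_of_boundary {F : ℂ → ℝ}
    (hF : HarmonicOnNhd F {z : ℂ | 0 < z.im}) {C : ℝ} (hC : ∀ z ∈ {z : ℂ | 0 < z.im}, F z ≤ C)
    (hbdry : ∀ x : ℝ, x ≠ 0 → ∀ ε > 0, ∀ᶠ z in 𝓝[{z : ℂ | 0 < z.im}] (x : ℂ), F z < ε) :
    ∀ z ∈ {z : ℂ | 0 < z.im}, F z ≤ 0 := by
  intro z hz
  have hlim : Tendsto (fun ε : ℝ => -(ε * upperHalfPlaneBarrier z)) (𝓝[>] 0) (𝓝 0) := by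
    have := ((continuous_mul_const (upperHalfPlaneBarrier z)).tendsto 0).neg
    simpa using this.mono_left nhdsWithin_le_nhds
  exact ge_of_tendsto hlim (eventually_nhdsWithin_of_forall fun ε hε => by
    linarith [hF.add_smul_upperHalfPlaneBarrier_nonpos hC hbdry hε hz])

theorem bounded_harmonic_vanishing_boundary_eq_zero (F : ℂ → ℝ)
    (hC2 : ContDiffOn ℝ 2 F {z : ℂ | 0 < z.im})
    (hharm : ∀ z ∈ {z : ℂ | 0 < z.im}, planeLaplacian F z = 0)
    (hbdd : ∃ C : ℝ, ∀ z ∈ {z : ℂ | 0 < z.im}, |F z| ≤ C)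
    (hbdry : ∀ x : ℝ, x ≠ 0 →
      Tendsto F (nhdsWithin (x : ℂ) {z : ℂ | 0 < z.im}) (nhds 0)) :
    ∀ z ∈ {z : ℂ | 0 < z.im}, F z = 0 := by
  obtain ⟨C, hC⟩ := hbdd
  have hF := harmonicOnNhd_of_planeLaplacian_eq_zero
    (isOpen_lt continuous_const Complex.continuous_im) hC2 hharm
  intro z hz
  have hupper := hF.nonpos_of_le_of_boundary (fun w hw => (le_abs_self _).trans (hC w hw))
    (fun x hx ε hε => (hbdry x hx).eventually (eventually_lt_nhds hε)) z hz
  have hlower := hF.neg.nonpos_of_le_of_boundary (fun w hw => (neg_le_abs _).trans (hC w hw))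
    (fun x hx ε hε => (hbdry x hx).neg.eventually (eventually_lt_nhds (by simpa using hε))) z hz
  simp only [Pi.neg_apply, neg_nonpos] at hlower
  exact le_antisymm hupper hlower
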